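/- arXiv:1612.07768 — 5 statements merged into one kernel-verified Lean document; each statement's English description precedes it below -/
import Mathlib

section
/- Every finite connected graph G on n ≥ 3 vertices satisfies srvc(G) ≤ n − 2, and hence also rvc(G) ≤ n − 2. -/
/-!
Let `s`, `t` be a diametral pair, at distance `d = diam G`, and let `x`, `y` be the neighbours of
`s` and `t` on a shortest `s`–`t` path. Coloring `y` like `s`, `t` like `x`, and all other
vertices distinctly uses `n - 2` colors, and the only equally colored pairs are at distance
`d - 1`. Two interior vertices of a shortest path of length at most `d` are at distance at most
`d - 2`, so every shortest path is vertex rainbow. When `d ≤ 2`, shortest paths have at most one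
interior vertex and a single color suffices.
-/

open SimpleGraph

/-- The internal vertices of a walk: its support with the two endpoints removed. -/
def internalVerts {V : Type} {G : SimpleGraph V} {u v : V} (p : G.Walk u v) : List V :=
  p.support.tail.dropLast

/-- A walk/path is *vertex rainbow* under the vertex coloring `ψ` if all of its internal
vertices have pairwise distinct colors. -/
def IsVertexRainbow {V C : Type} {G : SimpleGraph V} (ψ : V → C) {u v : V}
    (p : G.Walk u v) : Prop :=
  ((internalVerts p).map ψ).Nodup

/-- `G` is rainbow vertex connected under `ψ` if every pair of distinct vertices is joined
by a vertex rainbow path. -/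
def RainbowVertexConnected {V C : Type} (G : SimpleGraph V) (ψ : V → C) : Prop :=
  ∀ u v : V, u ≠ v → ∃ p : G.Walk u v, p.IsPath ∧ IsVertexRainbow ψ p

/-- `G` is strongly rainbow vertex connected under `ψ` if every pair of distinct vertices is
joined by a shortest path that is vertex rainbow. -/
def StrongRainbowVertexConnected {V C : Type} (G : SimpleGraph V) (ψ : V → C) : Prop :=
  ∀ u v : V, u ≠ v →
    ∃ p : G.Walk u v, p.IsPath ∧ p.length = G.dist u v ∧ IsVertexRainbow ψ p

/-- The rainbow vertex connection number: the least `k` such that some coloring with `k`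
colors makes `G` rainbow vertex connected. -/
noncomputable def rvc {V : Type} (G : SimpleGraph V) : ℕ :=
  sInf {k : ℕ | ∃ ψ : V → Fin k, RainbowVertexConnected G ψ}

/-- The strong rainbow vertex connection number: the least `k` such that some coloring with
`k` colors makes `G` strongly rainbow vertex connected. -/
noncomputable def srvc {V : Type} (G : SimpleGraph V) : ℕ :=
  sInf {k : ℕ | ∃ ψ : V → Fin k, StrongRainbowVertexConnected G ψ}


namespace SimpleGraph

variable {V : Type} {G : SimpleGraph V} {u v a b : V}

lemma Walk.dist_getVert_le_sub (p : G.Walk u v) {i j : ℕ} (hij : i ≤ j) :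
    G.dist (p.getVert i) (p.getVert j) ≤ j - i := by
  have hend : (p.drop i).getVert (j - i) = p.getVert j := by
    rw [Walk.drop_getVert, Nat.add_sub_cancel' hij]
  calc G.dist (p.getVert i) (p.getVert j)
      ≤ ((p.drop i).take (j - i)).length := hend ▸ dist_le _
    _ ≤ j - i := by rw [Walk.take_length]; exact min_le_left _ _

lemma Walk.exists_getVert_eq_of_mem_internalVerts {p : G.Walk u v} (ha : a ∈ internalVerts p) :
    ∃ i, 0 < i ∧ i < p.length ∧ p.getVert i = a := by
  obtain ⟨k, hk, rfl⟩ := List.mem_iff_getElem.mp ha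
  have hlen : (internalVerts p).length = p.length - 1 := by
    simp [internalVerts, p.length_support]
  refine ⟨k + 1, k.succ_pos, by omega, ?_⟩
  simp [internalVerts, p.getVert_eq_support_getElem (show k + 1 ≤ p.length by omega)]

lemma Walk.dist_add_two_le_length_of_mem_internalVerts {p : G.Walk u v}
    (ha : a ∈ internalVerts p) (hb : b ∈ internalVerts p) : G.dist a b + 2 ≤ p.length := by
  obtain ⟨i, hi0, hil, rfl⟩ := p.exists_getVert_eq_of_mem_internalVerts ha
  obtain ⟨j, hj0, hjl, rfl⟩ := p.exists_getVert_eq_of_mem_internalVerts hb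
  rcases le_total i j with hij | hji
  · have := p.dist_getVert_le_sub hij
    omega
  · have := p.dist_getVert_le_sub hji
    rw [dist_comm] at this
    omega

lemma Walk.IsPath.nodup_internalVerts {p : G.Walk u v} (hp : p.IsPath) :
    (internalVerts p).Nodup :=
  (p.support.tail.dropLast_sublist.trans p.support.tail_sublist).nodup hp.support_nodup

lemma exists_adj_dist_add_one_eq (h : G.dist u v ≠ 0) :
    ∃ w, G.Adj u w ∧ G.dist w v + 1 = G.dist u v := by
  obtain ⟨p, hp⟩ := exists_walk_of_dist_ne_zero h
  cases p with
  | nil => simp at hp h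
  | @cons _ w _ hadj q =>
    obtain ⟨q', hq'⟩ := q.reachable.exists_walk_length_eq_dist
    have hle : G.dist u v ≤ (Walk.cons hadj q').length := dist_le _
    have hge : G.dist w v ≤ q.length := dist_le q
    rw [Walk.length_cons] at hp hle
    exact ⟨w, hadj, by omega⟩

end SimpleGraph

open SimpleGraph

section Colorings

variable {V C : Type} {G : SimpleGraph V}

lemma IsVertexRainbow.comp {D : Type} {ψ : V → C} {g : C → D} (hg : Function.Injective g)
    {u v : V} {p : G.Walk u v} (h : IsVertexRainbow ψ p) : IsVertexRainbow (g ∘ ψ) p := by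
  unfold IsVertexRainbow at h ⊢
  rw [← List.map_map]
  exact h.map hg

lemma StrongRainbowVertexConnected.rainbowVertexConnected {ψ : V → C}
    (h : StrongRainbowVertexConnected G ψ) : RainbowVertexConnected G ψ := fun u v huv =>
  let ⟨p, hp, _, hψ⟩ := h u v huv
  ⟨p, hp, hψ⟩

lemma StrongRainbowVertexConnected.comp {D : Type} {ψ : V → C} {g : C → D}
    (hg : Function.Injective g) (h : StrongRainbowVertexConnected G ψ) :
    StrongRainbowVertexConnected G (g ∘ ψ) := fun u v huv =>
  let ⟨p, hp, hlen, hψ⟩ := h u v huv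
  ⟨p, hp, hlen, hψ.comp hg⟩

lemma strongRainbowVertexConnected_of_lt_dist_add_two (hG : G.Connected) (ψ : V → C) {D : ℕ}
    (hD : ∀ u v, G.dist u v ≤ D) (hψ : ∀ a b, a ≠ b → ψ a = ψ b → D < G.dist a b + 2) :
    StrongRainbowVertexConnected G ψ := by
  intro u v _
  obtain ⟨p, hp, hlen⟩ := hG.exists_path_of_dist u v
  refine ⟨p, hp, hlen, hp.nodup_internalVerts.map_on fun a ha b hb hab => ?_⟩
  by_contra hne
  have := hψ a b hne hab
  have := p.dist_add_two_le_length_of_mem_internalVerts ha hb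
  have := hD u v
  omega

lemma StrongRainbowVertexConnected.exists_fin [Fintype C] {ψ : V → C}
    (h : StrongRainbowVertexConnected G ψ) {k : ℕ} (hk : Fintype.card C ≤ k) :
    ∃ ψ' : V → Fin k, StrongRainbowVertexConnected G ψ' := by
  obtain ⟨e⟩ := Function.Embedding.nonempty_of_card_le (hk.trans (Fintype.card_fin k).ge)
  exact ⟨e ∘ ψ, h.comp e.injective⟩

end Colorings

section MergePairs

variable {V : Type} [DecidableEq V] {s y x t a b : V}

def mergePairs (s y x t : V) (w : V) : V :=
  if w = y then s else if w = t then x else w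

lemma mergePairs_ne (hsy : s ≠ y) (hst : s ≠ t) (hxy : x ≠ y) (hxt : x ≠ t) (w : V) :
    mergePairs s y x t w ≠ y ∧ mergePairs s y x t w ≠ t := by
  unfold mergePairs
  split_ifs <;> tauto

lemma eq_of_mergePairs_eq (hsx : s ≠ x) (hab : a ≠ b)
    (h : mergePairs s y x t a = mergePairs s y x t b) :
    (a = s ∧ b = y ∨ a = y ∧ b = s) ∨ (a = x ∧ b = t ∨ a = t ∧ b = x) := by
  unfold mergePairs at h
  split_ifs at h <;> subst_vars <;> tauto

end MergePairs

namespace SimpleGraph.Connected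

variable {V : Type} [Fintype V] {G : SimpleGraph V}

lemma exists_strongRainbowVertexConnected_of_three_le_diam [DecidableEq V] (hG : G.Connected)
    (hd : 3 ≤ G.diam) : ∃ ψ : V → Fin (Fintype.card V - 2), StrongRainbowVertexConnected G ψ := by
  have : Nonempty V := hG.nonempty
  have hdiam : ∀ u v, G.dist u v ≤ G.diam := fun _ _ =>
    dist_le_diam (connected_iff_ediam_ne_top.mp hG)
  obtain ⟨s, t, hdst⟩ := G.exists_dist_eq_diam
  obtain ⟨x, hsx, hdxt⟩ := exists_adj_dist_add_one_eq (G := G) (u := s) (v := t) (by omega)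
  obtain ⟨y, hty, hdsy⟩ :=
    exists_adj_dist_add_one_eq (G := G) (u := t) (v := s) (by rw [dist_comm]; omega)
  rw [dist_comm (u := y), dist_comm (u := t), hdst] at hdsy
  rw [hdst] at hdxt
  have hdsx : G.dist s x = 1 := dist_eq_one_iff_adj.mpr hsx
  have hsy : s ≠ y := by rintro rfl; simp at hdsy; omega
  have hxt : x ≠ t := by rintro rfl; simp at hdxt; omega
  have hxy : x ≠ y := by rintro rfl; omega
  have hst : s ≠ t := by rintro rfl; simp at hdst; omega
  let ψ : V → ({y, t}ᶜ : Finset V) := fun w =>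
    ⟨mergePairs s y x t w, by simpa using mergePairs_ne hsy hst hxy hxt w⟩
  refine StrongRainbowVertexConnected.exists_fin
    (strongRainbowVertexConnected_of_lt_dist_add_two hG ψ hdiam fun a b hab hψ => ?_) ?_
  · rcases eq_of_mergePairs_eq hsx.ne hab (congrArg Subtype.val hψ) with
      (⟨rfl, rfl⟩ | ⟨rfl, rfl⟩) | (⟨rfl, rfl⟩ | ⟨rfl, rfl⟩) <;>
      first | omega | (rw [dist_comm]; omega)
  · rw [Fintype.card_coe, Finset.card_compl, Finset.card_pair hty.ne.symm]

lemma exists_strongRainbowVertexConnected_card_sub_two (hG : G.Connected)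
    (hcard : 3 ≤ Fintype.card V) :
    ∃ ψ : V → Fin (Fintype.card V - 2), StrongRainbowVertexConnected G ψ := by
  classical
  have : Nonempty V := hG.nonempty
  rcases le_or_gt G.diam 2 with hd | hd
  · refine ⟨fun _ => ⟨0, by omega⟩, strongRainbowVertexConnected_of_lt_dist_add_two hG _
      (fun _ _ => dist_le_diam (connected_iff_ediam_ne_top.mp hG)) fun a b hab _ => ?_⟩
    have := hG.pos_dist_of_ne hab
    omega
  · exact hG.exists_strongRainbowVertexConnected_of_three_le_diam hd

end SimpleGraph.Connected

/-- Every finite connected graph on `n ≥ 3` vertices satisfies `srvc(G) ≤ n - 2`, and hence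
also `rvc(G) ≤ n - 2`. -/
theorem stmt3 {V : Type} [Fintype V] (G : SimpleGraph V) (hG : G.Connected)
    (hcard : 3 ≤ Fintype.card V) :
    srvc G ≤ Fintype.card V - 2 ∧ rvc G ≤ Fintype.card V - 2 := by
  obtain ⟨ψ, hψ⟩ := hG.exists_strongRainbowVertexConnected_card_sub_two hcard
  exact ⟨Nat.sInf_le ⟨ψ, hψ⟩, Nat.sInf_le ⟨ψ, hψ.rainbowVertexConnected⟩⟩
end

section
/- Let G be a block graph with a vertex coloring ψ. Then G is rainbow vertex connected under ψ if and only if G is strongly rainbow vertex connected under ψ. -/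
/-!
In a block graph, if two neighbours `a`, `b` of `u` are joined by a walk avoiding `u`, that walk
closes a cycle through `u`. The vertex set of a cycle is 2-connected, hence contained in a block,
and blocks are cliques, so `a` and `b` are adjacent. Applied at the first vertex of a path and of a
shortest path with the same ends, this drives an induction along any `u`–`v` path that produces a
shortest `u`–`v` path using only vertices of the given one. Its internal vertices are internal vertices of
the given path, so it inherits the rainbow property.
-/

open SimpleGraph

/-- A set of vertices induces a 2-connected subgraph: it has at least 3 vertices, the induced
subgraph is connected, and removing any single vertex keeps it connected (no cut vertex). -/
def IsTwoConnectedSet {V : Type} (G : SimpleGraph V) (S : Set V) : Prop :=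
  3 ≤ S.ncard ∧ (G.induce S).Connected ∧ ∀ v ∈ S, (G.induce (S \ {v})).Connected

/-- A block graph: a connected graph in which every block (maximal 2-connected subgraph)
is a clique. -/
def IsBlockGraph {V : Type} (G : SimpleGraph V) : Prop :=
  G.Connected ∧ ∀ S : Set V, Maximal (IsTwoConnectedSet G) S → G.IsClique S

namespace SimpleGraph

variable {V : Type} {G : SimpleGraph V}

namespace Walk

lemma IsPath.mem_support_tail_iff {u v x : V} {p : G.Walk u v} (hp : p.IsPath) (hn : ¬ p.Nil) :
    x ∈ p.tail.support ↔ x ∈ p.support ∧ x ≠ u := by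
  have hnd := hp.support_nodup
  rw [← cons_support_tail hn, List.nodup_cons] at hnd
  rw [← cons_support_tail hn, List.mem_cons]
  exact ⟨fun hx => ⟨Or.inr hx, by rintro rfl; exact hnd.1 hx⟩,
    fun ⟨hx, hxu⟩ => hx.resolve_left hxu⟩

lemma IsCycle.connected_induce_support_diff {u : V} {c : G.Walk u u} (hc : c.IsCycle) :
    (G.induce ({x | x ∈ c.support} \ {u})).Connected := by
  have hpath : c.tail.reverse.IsPath := hc.isPath_tail.reverse
  have hn : ¬ c.tail.reverse.Nil := by
    rw [nil_reverse, ← length_eq_zero_iff, length_tail]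
    have := hc.three_le_length
    omega
  have hS : {x | x ∈ c.support} \ {u} = {x | x ∈ c.tail.reverse.tail.support} := by
    ext x
    rw [Set.mem_ofPred_eq, hpath.mem_support_tail_iff hn, support_reverse, List.mem_reverse,
      ← cons_support_tail hc.not_nil]
    simp only [Set.mem_sdiff, Set.mem_ofPred_eq, Set.mem_singleton_iff, List.mem_cons]
    tauto
  rw [hS]
  exact c.tail.reverse.tail.connected_induce_support

lemma IsCycle.isTwoConnectedSet_support {u : V} {c : G.Walk u u} (hc : c.IsCycle) :
    IsTwoConnectedSet G {x | x ∈ c.support} := by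
  refine ⟨?_, c.connected_induce_support, fun v hv => ?_⟩
  · have hn := hc.not_nil
    refine Nat.succ_le_of_lt ((Set.two_lt_ncard_iff c.support.finite_toSet).mpr
      ⟨u, c.snd, c.penultimate, c.start_mem_support, c.getVert_mem_support 1,
        c.getVert_mem_support _, (c.adj_snd hn).ne, (c.adj_penultimate hn).ne.symm,
        hc.snd_ne_penultimate⟩)
  · classical
    have hrot : {x | x ∈ (c.rotate v hv).support} = {x | x ∈ c.support} := by
      ext; exact mem_support_rotate_iff ..
    have := (hc.rotate hv).connected_induce_support_diff
    rwa [hrot] at this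

end Walk

lemma dist_lt_of_mem_support_of_length_eq_dist {u v x : V} {g : G.Walk u v}
    (hg : g.length = G.dist u v) (hx : x ∈ g.support) (hxu : x ≠ u) :
    G.dist x v < G.dist u v := by
  classical
  calc G.dist x v ≤ (g.dropUntil x hx).length := dist_le _
    _ < g.length := Walk.length_dropUntil_lt_length hx hxu
    _ = G.dist u v := hg

end SimpleGraph

open Walk

namespace IsBlockGraph

variable {V : Type} {G : SimpleGraph V} [Finite V]

lemma adj_of_mem_support_of_isCycle (hG : IsBlockGraph G) {u a b : V} {c : G.Walk u u}
    (hc : c.IsCycle) (ha : a ∈ c.support) (hb : b ∈ c.support) (hab : a ≠ b) : G.Adj a b := by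
  obtain ⟨T, hcT, hT⟩ := Finite.exists_le_maximal hc.isTwoConnectedSet_support
  exact hG.2 T hT (hcT ha) (hcT hb) hab

lemma adj_of_walk_of_notMem_support (hG : IsBlockGraph G) {u a b : V} (hua : G.Adj u a)
    (hub : G.Adj u b) (hab : a ≠ b) (w : G.Walk a b) (hw : u ∉ w.support) : G.Adj a b := by
  classical
  have hwu : u ∉ w.bypass.support := fun h => hw (w.support_bypass_subset_support h)
  have hc : ((cons hua w.bypass).append (cons hub.symm nil)).IsCycle := by
    refine (w.bypass_isPath.cons hwu).isCycle_append (by simp [hub.ne.symm]) ?_ (Or.inl ?_)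
    · simpa using hwu
    · have : w.bypass.length ≠ 0 := fun h => hab (eq_of_length_eq_zero h)
      simp only [length_cons]
      omega
  exact hG.adj_of_mem_support_of_isCycle (a := a) (b := b) hc (by simp) (by simp) hab

lemma eq_or_adj_of_notMem_support_of_length_eq_dist (hG : IsBlockGraph G) {u a b v : V}
    (hua : G.Adj u a) (w : G.Walk a v) (hw : u ∉ w.support) (hub : G.Adj u b) (g : G.Walk b v)
    (hg : (cons hub g).length = G.dist u v) : a = b ∨ G.Adj a b := by
  refine or_iff_not_imp_left.mpr fun hab =>
    hG.adj_of_walk_of_notMem_support hua hub hab (w.append g.reverse) ?_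
  have hug : u ∉ g.support := ((cons_isPath_iff hub g).mp (isPath_of_length_eq_dist _ hg)).2
  simp [mem_support_append_iff, hw, hug]

lemma dist_le_of_adj_of_notMem_support (hG : IsBlockGraph G) {u a v : V} (hua : G.Adj u a)
    (w : G.Walk a v) (hw : u ∉ w.support) : G.dist a v ≤ G.dist u v := by
  have huv : u ≠ v := fun h => hw (h ▸ w.end_mem_support)
  obtain ⟨g, hg⟩ := hG.1.exists_walk_length_eq_dist u v
  obtain ⟨b, hub, g, rfl⟩ := exists_eq_cons_of_ne huv g
  rcases hG.eq_or_adj_of_notMem_support_of_length_eq_dist hua w hw hub g hg with rfl | hab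
  · exact (dist_le g).trans (by simp [← hg])
  · exact (dist_le (cons hab g)).trans (by simp [← hg])

lemma exists_length_eq_dist_support_subset (hG : IsBlockGraph G) {u v : V} (p : G.Walk u v)
    (hp : p.IsPath) : ∃ q : G.Walk u v, q.length = G.dist u v ∧ q.support ⊆ p.support := by
  induction p with
  | nil => exact ⟨nil, by simp, by simp⟩
  | @cons u a v hua p ih =>
    obtain ⟨hp, hu⟩ := (cons_isPath_iff hua p).mp hp
    obtain ⟨r, hr, hrp⟩ := ih hp
    have hle : G.dist u v ≤ G.dist a v + 1 := hr ▸ dist_le (cons hua r)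
    rcases (hG.dist_le_of_adj_of_notMem_support hua p hu).lt_or_eq with hlt | heq
    · exact ⟨cons hua r, by simp only [length_cons]; omega, List.cons_subset_cons _ hrp⟩
    -- `u` and `a` are equally far from `v`: the successor `c` of `a` on `r` is adjacent to `u`.
    · have huv : u ≠ v := fun h => hu (h ▸ p.end_mem_support)
      have hav : a ≠ v := by
        rintro rfl
        exact huv ((hG.1.dist_eq_zero_iff).mp (heq ▸ dist_self))
      obtain ⟨c, hac, r, rfl⟩ := exists_eq_cons_of_ne hav r
      obtain ⟨g, hg⟩ := hG.1.exists_walk_length_eq_dist u v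
      have hag : a ∉ g.support := fun ha =>
        (dist_lt_of_mem_support_of_length_eq_dist hg ha hua.ne.symm).ne heq
      have hcp : c ∈ p.support := hrp (by simp)
      obtain rfl | huc := hG.eq_or_adj_of_notMem_support_of_length_eq_dist hua.symm g hag hac r hr
      · exact absurd hcp hu
      refine ⟨cons huc r, ?_, List.cons_subset_cons _ fun x hx => hrp (List.mem_cons_of_mem _ hx)⟩
      simp only [length_cons] at hr ⊢
      omega

end IsBlockGraph

namespace SimpleGraph.Walk

variable {V : Type} {G : SimpleGraph V}

lemma mem_internalVerts_of_mem_support {u v x : V} {p : G.Walk u v} (hx : x ∈ p.support)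
    (hxu : x ≠ u) (hxv : x ≠ v) : x ∈ internalVerts p := by
  cases p with
  | nil => exact absurd (List.mem_singleton.mp hx) hxu
  | cons h q =>
    have hxq : x ∈ q.support := (List.mem_cons.mp hx).resolve_left hxu
    show x ∈ q.support.dropLast
    exact List.mem_dropLast_of_mem_of_ne_getLast hxq (by rwa [getLast_support])

lemma IsPath.mem_internalVerts_iff {u v x : V} {p : G.Walk u v} (hp : p.IsPath) :
    x ∈ internalVerts p ↔ x ∈ p.support ∧ x ≠ u ∧ x ≠ v := by
  refine ⟨fun hx => ⟨List.tail_subset _ (List.dropLast_subset _ hx), ?_, ?_⟩,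
    fun ⟨hx, hxu, hxv⟩ => mem_internalVerts_of_mem_support hx hxu hxv⟩
  · rintro rfl
    have hnd := hp.support_nodup
    rw [← cons_tail_support, List.nodup_cons] at hnd
    exact hnd.1 (List.dropLast_subset _ hx)
  · rintro rfl
    have hnd := hp.support_nodup
    rw [← List.dropLast_append_getLast p.support_ne_nil, getLast_support, List.nodup_append] at hnd
    rw [internalVerts, ← List.tail_dropLast] at hx
    exact hnd.2.2 x (List.tail_subset _ hx) x (List.mem_singleton_self x) rfl

lemma IsPath.nodup_internalVerts_s8 {u v : V} {p : G.Walk u v} (hp : p.IsPath) :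
    (internalVerts p).Nodup :=
  ((List.dropLast_sublist _).trans (List.tail_sublist _)).nodup hp.support_nodup

end SimpleGraph.Walk

lemma IsVertexRainbow.of_support_subset {V C : Type} {G : SimpleGraph V} {ψ : V → C} {u v : V}
    {p q : G.Walk u v} (hq : q.IsPath) (hqp : q.support ⊆ p.support) (hp : IsVertexRainbow ψ p) :
    IsVertexRainbow ψ q := by
  have hsub : internalVerts q ⊆ internalVerts p := fun x hx =>
    have ⟨hxq, hxu, hxv⟩ := hq.mem_internalVerts_iff.mp hx
    mem_internalVerts_of_mem_support (hqp hxq) hxu hxv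
  exact hq.nodup_internalVerts_s8.map_on fun x hx y hy =>
    List.inj_on_of_nodup_map hp (hsub hx) (hsub hy)

/-- A vertex-colored block graph is rainbow vertex connected if and only if it is strongly
rainbow vertex connected. -/
theorem stmt8 {V C : Type} [Fintype V] (G : SimpleGraph V) (hG : IsBlockGraph G)
    (ψ : V → C) :
    RainbowVertexConnected G ψ ↔ StrongRainbowVertexConnected G ψ := by
  refine ⟨fun h u v huv => ?_, fun h u v huv => ?_⟩
  · obtain ⟨p, hp, hψ⟩ := h u v huv
    obtain ⟨q, hq, hqp⟩ := hG.exists_length_eq_dist_support_subset p hp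
    have hqpath := q.isPath_of_length_eq_dist hq
    exact ⟨q, hqpath, hq, hψ.of_support_subset hqpath hqp⟩
  · obtain ⟨p, hp, -, hψ⟩ := h u v huv
    exact ⟨p, hp, hψ⟩
end

section
/- Let G be a cactus graph with vertex coloring ψ, let s and t be vertices of G, and let G' be the subgraph of G induced on the vertex set W = {w ∈ V(G) : d_G(s,w) + d_G(w,t) = d_G(s,t)}, with the coloring ψ restricted to W. Then there is a vertex rainbow shortest s–t path in G if and only if there is a vertex rainbow s–t path in G'. -/
open SimpleGraph

/-- Every edge of `G` lies in at most one cycle: any two cycles sharing an edge have the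
same edge set (i.e. they are the same cycle up to rotation and reversal). -/
def EveryEdgeInAtMostOneCycle {V : Type} (G : SimpleGraph V) : Prop :=
  ∀ (u v : V) (c : G.Walk u u) (c' : G.Walk v v), c.IsCycle → c'.IsCycle →
    ∀ e, e ∈ c.edges → e ∈ c'.edges → ∀ f, (f ∈ c.edges ↔ f ∈ c'.edges)

/-- A cactus graph: a connected graph in which every edge lies in at most one cycle. -/
def IsCactus {V : Type} (G : SimpleGraph V) : Prop :=
  G.Connected ∧ EveryEdgeInAtMostOneCycle G

/-! In a cactus, a path from `s` to `t` that stays in `W` is a shortest path. Along it the level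
`d(s, ·)` changes by at most one per step. A step within one level, or a step up followed by a
step down, would put one edge on two different cycles: one closed through shortest paths from
`s` (all below the level of the edge), the other through shortest paths to `t` or through the
rest of the path (all away from the lower part). -/

namespace SimpleGraph

variable {V : Type} {G : SimpleGraph V}

theorem Walk.dist_add_dist_of_mem_support {a b z : V} (p : G.Walk a b)
    (hp : p.length = G.dist a b) (hz : z ∈ p.support) :
    G.dist a z + G.dist z b = G.dist a b := by
  classical
  have hsplit := congrArg Walk.length (p.take_spec hz)
  rw [Walk.length_append] at hsplit
  have := dist_le (p.takeUntil z hz)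
  have := dist_le (p.dropUntil z hz)
  have := (p.takeUntil z hz).reachable.dist_triangle_left b
  omega

/-- The edge `ab` closes `p.bypass` and `q.bypass` into two cycles through `ab`; these have the
same edges, in particular the first edge of `p.bypass`. -/
theorem EveryEdgeInAtMostOneCycle.exists_mem_support_mk_mem_edges
    (hcac : EveryEdgeInAtMostOneCycle G) {a b : V} (hab : G.Adj a b) (p q : G.Walk a b)
    (hp : s(a, b) ∉ p.edges) (hq : s(a, b) ∉ q.edges) :
    ∃ c ∈ p.support, s(a, c) ∈ q.edges := by
  classical
  have cycle_of {r : G.Walk a b} (hr : s(a, b) ∉ r.edges) :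
      (Walk.cons hab.symm r.bypass).IsCycle := by
    refine (Walk.cons_isCycle_iff _ _).mpr ⟨r.bypass_isPath, fun h => hr ?_⟩
    exact Sym2.eq_swap ▸ r.edges_bypass_subset_edges h
  obtain ⟨c, hac, r, hpr⟩ := Walk.exists_eq_cons_of_ne hab.ne p.bypass
  have hc : c ∈ p.support := p.support_bypass_subset_support (by simp [hpr])
  have hedge : s(a, c) ∈ (Walk.cons hab.symm p.bypass).edges := by simp [hpr]
  have hshared :=
    (hcac b b _ _ (cycle_of hp) (cycle_of hq) s(b, a) (by simp) (by simp) s(a, c)).mp hedge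
  refine ⟨c, hc, ?_⟩
  rw [Walk.edges_cons, List.mem_cons] at hshared
  rcases hshared with hba | hcq
  · obtain rfl : c = b := by grind [hab.ne, Sym2.eq_iff]
    exact absurd (p.edges_bypass_subset_edges (by simp [hpr])) hp
  · exact q.edges_bypass_subset_edges hcq

theorem IsCactus.dist_ne_dist_of_adj (hG : IsCactus G) {s t x y : V} (hxy : G.Adj x y)
    (hx : G.dist s x + G.dist x t = G.dist s t) (hy : G.dist s y + G.dist y t = G.dist s t) :
    G.dist s x ≠ G.dist s y := by
  intro hlevel
  obtain ⟨hconn, hcac⟩ := hG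
  obtain ⟨Px, hPx⟩ := hconn.exists_walk_length_eq_dist s x
  obtain ⟨Py, hPy⟩ := hconn.exists_walk_length_eq_dist s y
  obtain ⟨Qx, hQx⟩ := hconn.exists_walk_length_eq_dist x t
  obtain ⟨Qy, hQy⟩ := hconn.exists_walk_length_eq_dist y t
  have hxy1 : G.dist x y = 1 := dist_eq_one_iff_adj.mpr hxy
  have hyx1 : G.dist y x = 1 := dist_eq_one_iff_adj.mpr hxy.symm
  have hxy_low : s(x, y) ∉ (Px.reverse.append Py).edges := by
    simp only [Walk.edges_append, Walk.edges_reverse, List.mem_append, List.mem_reverse]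
    rintro (h | h)
    · have := Px.dist_add_dist_of_mem_support hPx (Px.snd_mem_support_of_mem_edges h); omega
    · have := Py.dist_add_dist_of_mem_support hPy (Py.fst_mem_support_of_mem_edges h); omega
  have hxy_high : s(x, y) ∉ (Qx.append Qy.reverse).edges := by
    simp only [Walk.edges_append, Walk.edges_reverse, List.mem_append, List.mem_reverse]
    rintro (h | h)
    · have := Qx.dist_add_dist_of_mem_support hQx (Qx.snd_mem_support_of_mem_edges h); omega
    · have := Qy.dist_add_dist_of_mem_support hQy (Qy.fst_mem_support_of_mem_edges h); omega
  obtain ⟨c, hc, hxc⟩ := hcac.exists_mem_support_mk_mem_edges hxy _ _ hxy_low hxy_high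
  have hcx1 : G.dist x c = 1 := dist_eq_one_iff_adj.mpr (Walk.adj_of_mem_edges _ hxc)
  have hc_low : G.dist s c ≤ G.dist s x := by
    simp only [Walk.mem_support_append_iff, Walk.support_reverse, List.mem_reverse] at hc
    rcases hc with hc | hc
    · have := Px.dist_add_dist_of_mem_support hPx hc; omega
    · have := Py.dist_add_dist_of_mem_support hPy hc; omega
  have := hconn.dist_triangle (u := s) (v := c) (w := t)
  simp only [Walk.edges_append, Walk.edges_reverse, List.mem_append, List.mem_reverse] at hxc
  rcases hxc with hxc | hxc
  · have := Qx.dist_add_dist_of_mem_support hQx (Qx.snd_mem_support_of_mem_edges hxc); omega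
  · have := Qy.dist_add_dist_of_mem_support hQy (Qy.fst_mem_support_of_mem_edges hxc); omega

theorem IsCactus.mem_support_of_peak (hG : IsCactus G) {s t u m v : V}
    (hum : G.Adj u m) (hmv : G.Adj m v) (huv : u ≠ v)
    (hu : G.dist s u + G.dist u t = G.dist s t) (hm : G.dist s m + G.dist m t = G.dist s t)
    (hv : G.dist s v + G.dist v t = G.dist s t)
    (hlevel_u : G.dist s m = G.dist s u + 1) (hlevel_v : G.dist s m = G.dist s v + 1)
    (q : G.Walk v t) : m ∈ q.support := by
  by_contra hmq
  obtain ⟨hconn, hcac⟩ := hG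
  obtain ⟨Pu, hPu⟩ := hconn.exists_walk_length_eq_dist s u
  obtain ⟨Pv, hPv⟩ := hconn.exists_walk_length_eq_dist s v
  obtain ⟨Qm, hQm⟩ := hconn.exists_walk_length_eq_dist m t
  have hmv1 : G.dist m v = 1 := dist_eq_one_iff_adj.mpr hmv
  have hmv_low : s(m, v) ∉ (Walk.cons hum.symm (Pu.reverse.append Pv)).edges := by
    simp only [Walk.edges_cons, Walk.edges_append, Walk.edges_reverse, List.mem_cons,
      List.mem_append, List.mem_reverse]
    rintro (h | h | h)
    · exact huv (by grind [Sym2.eq_iff])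
    · have := Pu.dist_add_dist_of_mem_support hPu (Pu.fst_mem_support_of_mem_edges h); omega
    · have := Pv.dist_add_dist_of_mem_support hPv (Pv.fst_mem_support_of_mem_edges h); omega
  have hmv_high : s(m, v) ∉ (Qm.append q.reverse).edges := by
    simp only [Walk.edges_append, Walk.edges_reverse, List.mem_append, List.mem_reverse]
    rintro (h | h)
    · have := Qm.dist_add_dist_of_mem_support hQm (Qm.snd_mem_support_of_mem_edges h); omega
    · exact hmq (q.fst_mem_support_of_mem_edges h)
  obtain ⟨c, hc, hmc⟩ := hcac.exists_mem_support_mk_mem_edges hmv _ _ hmv_low hmv_high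
  have hmc1 : G.dist m c = 1 := dist_eq_one_iff_adj.mpr (Walk.adj_of_mem_edges _ hmc)
  have hc_low : G.dist s c < G.dist s m := by
    simp only [Walk.support_cons, List.mem_cons, Walk.mem_support_append_iff,
      Walk.support_reverse, List.mem_reverse] at hc
    rcases hc with rfl | hc | hc
    · simp at hmc1
    · have := Pu.dist_add_dist_of_mem_support hPu hc; omega
    · have := Pv.dist_add_dist_of_mem_support hPv hc; omega
  have := hconn.dist_triangle (u := s) (v := c) (w := t)
  simp only [Walk.edges_append, Walk.edges_reverse, List.mem_append, List.mem_reverse] at hmc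
  rcases hmc with hmc | hmc
  · have := Qm.dist_add_dist_of_mem_support hQm (Qm.snd_mem_support_of_mem_edges hmc); omega
  · exact hmq (q.fst_mem_support_of_mem_edges hmc)

theorem IsCactus.length_eq_dist_of_adj_of_dist_eq_add_one (hG : IsCactus G) {s t u x : V}
    (q : G.Walk x t) (hq : q.IsPath)
    (hW : ∀ w ∈ q.support, G.dist s w + G.dist w t = G.dist s t)
    (hux : G.Adj u x) (hu : G.dist s u + G.dist u t = G.dist s t)
    (hx : G.dist s x = G.dist s u + 1) (huq : u ∉ q.support) :
    q.length = G.dist x t := by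
  induction q generalizing u with
  | nil => simp
  | @cons x y t hxy q ih =>
    have hx_mem := hW x (by simp)
    have hy_mem := hW y (by simp)
    have hxq : x ∉ q.support := ((Walk.cons_isPath_iff _ _).mp hq).2
    rcases hxy.diff_dist_adj (u := s) with h | h | h
    · exact absurd h.symm (hG.dist_ne_dist_of_adj hxy hx_mem hy_mem)
    · have := ih hq.of_cons (fun w hw => hW w (by simp [hw])) hxy hx_mem h hxq
      rw [Walk.length_cons]
      omega
    · have huy : u ≠ y := fun huy => huq (by simp [huy])
      exact absurd (hG.mem_support_of_peak hux hxy huy hu hx_mem hy_mem hx (by omega) q) hxq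

theorem IsCactus.length_eq_dist_of_isPath (hG : IsCactus G) {s t : V} (p : G.Walk s t)
    (hp : p.IsPath) (hW : ∀ w ∈ p.support, G.dist s w + G.dist w t = G.dist s t) :
    p.length = G.dist s t := by
  cases p with
  | nil => simp
  | @cons _ y _ hsy q =>
    have hy := hW y (by simp)
    have hsy1 : G.dist s y = 1 := dist_eq_one_iff_adj.mpr hsy
    have := hG.length_eq_dist_of_adj_of_dist_eq_add_one q hp.of_cons
      (fun w hw => hW w (by simp [hw])) hsy (hW s (by simp)) (by simp [hsy1])
      ((Walk.cons_isPath_iff _ _).mp hp).2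
    rw [Walk.length_cons]
    omega

end SimpleGraph

open SimpleGraph

theorem internalVerts_map {V V' : Type} {G : SimpleGraph V} {G' : SimpleGraph V'} (f : G →g G')
    {u v : V} (p : G.Walk u v) : internalVerts (p.map f) = (internalVerts p).map f := by
  simp [internalVerts, Walk.support_map, List.map_dropLast]

theorem isVertexRainbow_map {V V' C : Type} {G : SimpleGraph V} {G' : SimpleGraph V'}
    (f : G →g G') (ψ : V' → C) {u v : V} (p : G.Walk u v) :
    IsVertexRainbow ψ (p.map f) ↔ IsVertexRainbow (ψ ∘ f) p := by
  simp only [IsVertexRainbow, internalVerts_map, List.map_map]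

theorem stmt10_general {V C : Type} (G : SimpleGraph V) (hG : IsCactus G)
    (ψ : V → C) (s t : V) (W : Set V)
    (hW : W = {w : V | G.dist s w + G.dist w t = G.dist s t})
    (hs : s ∈ W) (ht : t ∈ W) :
    (∃ p : G.Walk s t, p.IsPath ∧ p.length = G.dist s t ∧ IsVertexRainbow ψ p) ↔
      (∃ q : (G.induce W).Walk ⟨s, hs⟩ ⟨t, ht⟩,
        q.IsPath ∧ IsVertexRainbow (fun x => ψ x.1) q) := by
  have hmemW : ∀ w, w ∈ W ↔ G.dist s w + G.dist w t = G.dist s t := by simp [hW]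
  let ι := (Embedding.induce (G := G) W).toHom
  have hι : Function.Injective ι := (Embedding.induce (G := G) W).injective
  constructor
  · rintro ⟨p, hp, hlen, hrb⟩
    have hpW : ∀ w ∈ p.support, w ∈ W :=
      fun w hw => (hmemW w).mpr (p.dist_add_dist_of_mem_support hlen hw)
    have hlift : (p.induce W hpW).map ι = p := p.map_induce hpW
    rw [← hlift] at hp hrb
    exact ⟨p.induce W hpW, (Walk.isPath_map_iff_of_injective hι).mp hp,
      (isVertexRainbow_map ι ψ _).mp hrb⟩
  · rintro ⟨q, hq, hrb⟩
    have hp := hq.map hι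
    refine ⟨q.map ι, hp, hG.length_eq_dist_of_isPath _ hp ?_,
      (isVertexRainbow_map ι ψ q).mpr hrb⟩
    rintro _ hw
    obtain ⟨w, -, rfl⟩ := List.mem_map.mp (Walk.support_map ι q ▸ hw)
    exact (hmemW w).mp w.2

/-- For a vertex-colored cactus graph `G` and vertices `s`, `t`, letting `G'` be the
subgraph induced on `W = {w | d(s,w) + d(w,t) = d(s,t)}`, there is a vertex rainbow
shortest `s`–`t` path in `G` iff there is a vertex rainbow `s`–`t` path in `G'`. -/
theorem stmt10 {V C : Type} [Fintype V] (G : SimpleGraph V) (hG : IsCactus G)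
    (ψ : V → C) (s t : V) (W : Set V)
    (hW : W = {w : V | G.dist s w + G.dist w t = G.dist s t})
    (hs : s ∈ W) (ht : t ∈ W) :
    (∃ p : G.Walk s t, p.IsPath ∧ p.length = G.dist s t ∧ IsVertexRainbow ψ p) ↔
      (∃ q : (G.induce W).Walk ⟨s, hs⟩ ⟨t, ht⟩,
        q.IsPath ∧ IsVertexRainbow (fun x => ψ x.1) q) :=
  stmt10_general G hG ψ s t W hW hs ht
end

section
/- Let G be a cactus graph, let s and t be vertices of G, and let G' be the subgraph of G induced on the vertex set W = {w ∈ V(G) : d_G(s,w) + d_G(w,t) = d_G(s,t)}. Then every s–t path in G' has length exactly d_G(s,t); that is, every s–t path in G' is a shortest s–t path in G. -/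
open SimpleGraph

/-! Along an `s`–`t` path inside `W` the distance from `s` must grow by exactly one at every
step. Suppose it first fails at `w`, with predecessor `x` and successor `y`, so that `y` is not
farther from `s` than `w`. Then the edge `wy` closes two cycles: one through `x` and shortest
paths back to `s`, none of whose vertices is farther from `s` than `w`; and one through the rest of
the path and a shortest `w`–`t` path, whose second vertex `b` is farther from `s` than `w`
because `w ∈ W`. In a cactus the two cycles share all their edges, so `wb` lies on the first
one, which is absurd. -/

namespace SimpleGraph

variable {V : Type*} {G : SimpleGraph V}

lemma Walk.dist_add_dist_of_mem_support_of_length_eq_dist (hconn : G.Connected) {u v w : V}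
    {p : G.Walk u v} (hp : p.length = G.dist u v) (hw : w ∈ p.support) :
    G.dist u w + G.dist w v = G.dist u v := by
  classical
  have hlen := congrArg Walk.length (p.take_spec hw)
  rw [Walk.length_append] at hlen
  have := dist_le (p.takeUntil w hw)
  have := dist_le (p.dropUntil w hw)
  have : G.dist u v ≤ G.dist u w + G.dist w v := hconn.dist_triangle
  omega

lemma exists_isCycle_of_walk_avoiding {w y b : V} (hy : G.Adj w y) (hb : G.Adj w b)
    (hyb : y ≠ b) (P : G.Walk y b) (hw : w ∉ P.support) :
    ∃ c : G.Walk w w, c.IsCycle ∧ s(w, y) ∈ c.edges ∧ s(w, b) ∈ c.edges ∧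
      ∀ v ∈ c.support, v = w ∨ v ∈ P.support := by
  classical
  have hw' : w ∉ P.bypass.support := fun h => hw (P.support_bypass_subset_support h)
  refine ⟨.cons hy (P.bypass.concat hb.symm), ?_, by simp, by simp [Sym2.eq_swap], ?_⟩
  · refine (Walk.cons_isCycle_iff _ _).mpr ⟨P.bypass_isPath.concat hw' _, ?_⟩
    simp only [Walk.edges_concat, List.concat_eq_append, List.mem_append, List.mem_singleton,
      Sym2.eq_swap (a := b), Sym2.congr_right, not_or]
    exact ⟨fun h => hw' (P.bypass.fst_mem_support_of_mem_edges h), hyb⟩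
  · intro v hv
    simp only [Walk.support_cons, Walk.support_concat, List.mem_cons, List.mem_append,
      List.not_mem_nil, or_false] at hv
    rcases hv with rfl | hv | rfl
    · exact .inl rfl
    · exact .inr (P.support_bypass_subset_support hv)
    · exact .inl rfl

lemma exists_isCycle_support_dist_le (hconn : G.Connected) {s w x y : V} (hxw : G.Adj x w)
    (hx : G.dist s x < G.dist s w) (hwy : G.Adj w y) (hy : G.dist s y ≤ G.dist s w)
    (hxy : x ≠ y) :
    ∃ c : G.Walk w w, c.IsCycle ∧ s(w, y) ∈ c.edges ∧
      ∀ v ∈ c.support, G.dist s v ≤ G.dist s w := by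
  obtain ⟨gx, hgx⟩ := hconn.exists_walk_length_eq_dist s x
  obtain ⟨gy, hgy⟩ := hconn.exists_walk_length_eq_dist s y
  have hlev {z : V} {g : G.Walk s z} (hg : g.length = G.dist s z) :
      ∀ v ∈ g.support, G.dist s v ≤ G.dist s z := fun v hv => by
    have := Walk.dist_add_dist_of_mem_support_of_length_eq_dist hconn hg hv
    omega
  have hwx : w ∉ gx.support := fun h => by
    have := hlev hgx w h
    omega
  have hwy' : w ∉ gy.support := fun h => by
    have := Walk.dist_add_dist_of_mem_support_of_length_eq_dist hconn hgy h
    have : G.dist w y = 1 := dist_eq_one_iff_adj.mpr hwy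
    omega
  obtain ⟨c, hc, hcy, -, hcsupp⟩ := exists_isCycle_of_walk_avoiding hwy hxw.symm hxy.symm
    (gy.reverse.append gx) (by simp [hwx, hwy'])
  refine ⟨c, hc, hcy, fun v hv => ?_⟩
  rcases hcsupp v hv with rfl | hv
  · exact le_rfl
  simp only [Walk.mem_support_append_iff, Walk.support_reverse, List.mem_reverse] at hv
  rcases hv with hv | hv
  · exact (hlev hgy v hv).trans hy
  · exact (hlev hgx v hv).trans hx.le

lemma exists_isCycle_edge_dist_gt (hconn : G.Connected) {s t w y : V}
    (hw : G.dist s w + G.dist w t = G.dist s t) (hwy : G.Adj w y) (hy : G.dist s y ≤ G.dist s w)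
    (Y : G.Walk y t) (hwY : w ∉ Y.support) :
    ∃ c : G.Walk w w, c.IsCycle ∧ s(w, y) ∈ c.edges ∧
      ∃ b, s(w, b) ∈ c.edges ∧ G.dist s w < G.dist s b := by
  obtain ⟨T, hT, hTlen⟩ := hconn.exists_path_of_dist w t
  cases T with
  | nil => exact absurd Y.end_mem_support hwY
  | @cons _ b _ hwb T' =>
    have hb : G.dist s w < G.dist s b := by
      have := dist_le T'
      have : G.dist s t ≤ G.dist s b + G.dist b t := hconn.dist_triangle
      rw [Walk.length_cons] at hTlen
      omega
    have hwT' : w ∉ T'.support := ((Walk.cons_isPath_iff _ _).mp hT).2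
    obtain ⟨c, hc, hcy, hcb, -⟩ := exists_isCycle_of_walk_avoiding hwy hwb
      (by rintro rfl; omega) (Y.append T'.reverse) (by simp [hwY, hwT'])
    exact ⟨c, hc, hcy, b, hcb, hb⟩

end SimpleGraph

namespace IsCactus

variable {V : Type} {G : SimpleGraph V}

theorem dist_eq_add_one_of_adj (hG : IsCactus G) {s t w x y : V}
    (hw : G.dist s w + G.dist w t = G.dist s t) (hxw : G.Adj x w) (hx : G.dist s x < G.dist s w)
    (hwy : G.Adj w y) (hxy : x ≠ y) (Y : G.Walk y t) (hwY : w ∉ Y.support) :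
    G.dist s y = G.dist s w + 1 := by
  by_contra hne
  have hy : G.dist s y ≤ G.dist s w := by
    have : G.dist s y ≤ G.dist s w + G.dist w y := hG.1.dist_triangle
    have : G.dist w y = 1 := dist_eq_one_iff_adj.mpr hwy
    omega
  obtain ⟨c, hc, hcy, hlow⟩ := exists_isCycle_support_dist_le hG.1 hxw hx hwy hy hxy
  obtain ⟨c', hc', hc'y, b, hc'b, hb⟩ :=
    exists_isCycle_edge_dist_gt hG.1 hw hwy hy Y hwY
  have hcb : s(w, b) ∈ c.edges := (hG.2 _ _ c' c hc' hc _ hc'y hcy _).mp hc'b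
  have := hlow b (c.snd_mem_support_of_mem_edges hcb)
  omega

theorem length_eq_dist_of_isPath_of_adj (hG : IsCactus G) {s t : V} {x w : V}
    (q : G.Walk w t) (hq : q.IsPath)
    (hW : ∀ v ∈ q.support, G.dist s v + G.dist v t = G.dist s t)
    (hxw : G.Adj x w) (hx : G.dist s x < G.dist s w) (hxq : x ∉ q.support) :
    q.length = G.dist w t := by
  induction q generalizing x with
  | nil => simp
  | @cons w y _ hwy q ih =>
    have hwq : w ∉ q.support := ((Walk.cons_isPath_iff _ _).mp hq).2
    have hxy : x ≠ y := by
      rintro rfl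
      exact hxq (by simp)
    have hwW := hW w (by simp)
    have hyW := hW y (by simp)
    have hy := hG.dist_eq_add_one_of_adj hwW hxw hx hwy hxy q hwq
    have hlen := ih hq.of_cons (fun v hv => hW v (by simp [hv])) hwy (by omega) hwq
    rw [Walk.length_cons]
    omega

theorem length_eq_dist_of_isPath (hG : IsCactus G) {s t : V} (p : G.Walk s t)
    (hp : p.IsPath) (hW : ∀ v ∈ p.support, G.dist s v + G.dist v t = G.dist s t) :
    p.length = G.dist s t := by
  cases p with
  | nil => simp
  | @cons _ y _ hsy q =>
    have hy : G.dist s y = 1 := dist_eq_one_iff_adj.mpr hsy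
    have := hG.length_eq_dist_of_isPath_of_adj q hp.of_cons (fun v hv => hW v (by simp [hv])) hsy
      (by simp [hy]) ((Walk.cons_isPath_iff _ _).mp hp).2
    have := hW y (by simp)
    rw [Walk.length_cons]
    omega

end IsCactus

theorem stmt11_general {V : Type} (G : SimpleGraph V) (hG : IsCactus G)
    (s t : V) (W : Set V)
    (hW : W = {w : V | G.dist s w + G.dist w t = G.dist s t})
    (hs : s ∈ W) (ht : t ∈ W) :
    ∀ q : (G.induce W).Walk ⟨s, hs⟩ ⟨t, ht⟩, q.IsPath → q.length = G.dist s t := by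
  subst hW
  intro q hq
  have hpW : ∀ v ∈ (q.map (Embedding.induce _).toHom).support,
      G.dist s v + G.dist v t = G.dist s t := fun v hv => by
    rw [Walk.support_map, List.mem_map] at hv
    obtain ⟨a, -, rfl⟩ := hv
    exact a.2
  rw [← Walk.length_map (Embedding.induce _).toHom]
  exact hG.length_eq_dist_of_isPath _ (hq.map Subtype.val_injective) hpW

/-- For a cactus graph `G` and vertices `s`, `t`, every `s`–`t` path in the subgraph
induced on `W = {w | d(s,w) + d(w,t) = d(s,t)}` has length exactly `d_G(s,t)`, i.e. it is
a shortest `s`–`t` path of `G`. -/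
theorem stmt11 {V : Type} [Fintype V] (G : SimpleGraph V) (hG : IsCactus G)
    (s t : V) (W : Set V)
    (hW : W = {w : V | G.dist s w + G.dist w t = G.dist s t})
    (hs : s ∈ W) (ht : t ∈ W) :
    ∀ q : (G.induce W).Walk ⟨s, hs⟩ ⟨t, ht⟩, q.IsPath → q.length = G.dist s t :=
  stmt11_general G hG s t W hW hs ht
end

section
/- Let d ≥ 3 and p ≥ 1. Let B_d be the graph obtained from the complete graph K_{d−1} by adding two new nonadjacent vertices, each adjacent to all d − 1 vertices of the K_{d−1} (so B_d has d − 1 vertices of degree d and two vertices of degree d − 1). Let D be obtained by chaining p disjoint copies of B_d: for each i ∈ {1,…,p−1}, add an edge joining one degree-(d−1) vertex of the i-th copy to one degree-(d−1) vertex of the (i+1)-st copy, using each degree-(d−1) vertex for at most one such edge. Then in D every vertex has degree d except exactly two vertices (the unused degree-(d−1) vertex of the first copy and the unused degree-(d−1) vertex of the last copy), which have degree d − 1, and the diameter of D equals 3p − 1. -/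
open SimpleGraph

/-- The adjacency relation generating the detour gadget `D` made of `p` chained copies of
the building block `B_d` (a `K_{d-1}`, the `Sum.inl` vertices of each copy, plus two
nonadjacent vertices, the `Sum.inr` vertices, each adjacent to all of the `K_{d-1}`):
copy `i`'s second special vertex (`Sum.inr 1`) is joined to copy `i+1`'s first special
vertex (`Sum.inr 0`), so each degree-`(d-1)` vertex of a block is used for at most one
chaining edge. -/
def DetourRel (d p : ℕ) :
    Fin p × (Fin (d - 1) ⊕ Fin 2) → Fin p × (Fin (d - 1) ⊕ Fin 2) → Prop
  | (i, .inl a), (j, .inl b) => i = j ∧ a ≠ b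
  | (i, .inl _), (j, .inr _) => i = j
  | (i, .inr _), (j, .inl _) => i = j
  | (i, .inr s), (j, .inr s') => (i : ℕ) + 1 = (j : ℕ) ∧ s = 1 ∧ s' = 0

/-- The detour gadget obtained by chaining `p` disjoint copies of `B_d`. -/
def detour (d p : ℕ) : SimpleGraph (Fin p × (Fin (d - 1) ⊕ Fin 2)) :=
  SimpleGraph.fromRel (DetourRel d p)

/-! A clique vertex sees the other `d - 2` clique vertices and both special vertices of its
block; a special vertex sees the `d - 1` clique vertices and, unless it is one of the two ends,
one special vertex of a neighbouring block. Any two vertices of a block are joined through a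
clique vertex by a walk of length at most `2`, and passing to the next block costs `3`, so the
diameter is at most `3 (p - 1) + 2`. Conversely, the level `3 i + 1` of a clique vertex of block
`i` and `3 i + 2 s` of its special vertex `s` grows by at most one along each edge and differs by
`3 p - 1` between the two ends. -/

namespace SimpleGraph

variable {V : Type*} {G : SimpleGraph V}

theorem Walk.le_add_length_of_adj {f : V → ℕ} (hf : ∀ x y, G.Adj x y → f y ≤ f x + 1)
    {x y : V} (w : G.Walk x y) : f y ≤ f x + w.length := by
  induction w with
  | nil => simp
  | cons h _ ih => grind [Walk.length_cons, hf _ _ h]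

theorem Reachable.le_add_dist {f : V → ℕ} (hf : ∀ x y, G.Adj x y → f y ≤ f x + 1)
    {x y : V} (h : G.Reachable x y) : f y ≤ f x + G.dist x y := by
  obtain ⟨w, hw⟩ := h.exists_walk_length_eq_dist
  exact hw ▸ w.le_add_length_of_adj hf

end SimpleGraph

namespace Detour

variable {d p : ℕ}

@[simp]
theorem adj_inl_inl {i j : Fin p} {a b : Fin (d - 1)} :
    (detour d p).Adj (i, .inl a) (j, .inl b) ↔ i = j ∧ a ≠ b := by
  simp only [detour, fromRel_adj, DetourRel, ne_eq, Prod.mk.injEq, Sum.inl.injEq]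
  grind

@[simp]
theorem adj_inl_inr {i j : Fin p} {a : Fin (d - 1)} {s : Fin 2} :
    (detour d p).Adj (i, .inl a) (j, .inr s) ↔ i = j := by
  simp only [detour, fromRel_adj, DetourRel, ne_eq, Prod.mk.injEq, reduceCtorEq]
  grind

@[simp]
theorem adj_inr_inl {i j : Fin p} {a : Fin (d - 1)} {s : Fin 2} :
    (detour d p).Adj (i, .inr s) (j, .inl a) ↔ i = j := by
  rw [adj_comm, adj_inl_inr, eq_comm]

@[simp]
theorem adj_inr_inr {i j : Fin p} {s t : Fin 2} :
    (detour d p).Adj (i, .inr s) (j, .inr t) ↔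
      ((i : ℕ) + 1 = j ∧ s = 1 ∧ t = 0) ∨ ((j : ℕ) + 1 = i ∧ t = 1 ∧ s = 0) := by
  simp only [detour, fromRel_adj, DetourRel, ne_eq, Prod.mk.injEq, Sum.inr.injEq]
  grind

def clique (i : Fin p) : Set (Fin p × (Fin (d - 1) ⊕ Fin 2)) :=
  Set.range fun a => (i, .inl a)

theorem ncard_clique (i : Fin p) : (clique (d := d) i).ncard = d - 1 := by
  rw [clique, Set.ncard_range_of_injective (fun a b h => by simpa using h),
    Nat.card_eq_fintype_card, Fintype.card_fin]

theorem inr_notMem_clique (i j : Fin p) (s : Fin 2) : (j, .inr s) ∉ clique (d := d) i := by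
  simp [clique]

theorem neighborSet_inl (i : Fin p) (a : Fin (d - 1)) :
    (detour d p).neighborSet (i, .inl a) =
      clique i \ {(i, .inl a)} ∪ {(i, .inr 0), (i, .inr 1)} := by
  ext ⟨j, b | s⟩
  · simp only [mem_neighborSet, adj_inl_inl, clique]
    grind
  · fin_cases s <;> simp [clique, eq_comm]

theorem ncard_neighborSet_inl (hd : 2 ≤ d) (i : Fin p) (a : Fin (d - 1)) :
    ((detour d p).neighborSet (i, .inl a)).ncard = d := by
  have ha : (i, .inl a) ∈ clique i := ⟨a, rfl⟩
  rw [neighborSet_inl, Set.ncard_union_eq, Set.ncard_sdiff_singleton_of_mem ha, ncard_clique,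
    Set.ncard_pair (by simp)]
  · omega
  · simp [Set.disjoint_left, clique]

theorem neighborSet_inr_of_end (i : Fin p) (s : Fin 2)
    (h : ((i : ℕ) = 0 ∧ s = 0) ∨ ((i : ℕ) = p - 1 ∧ s = 1)) :
    (detour d p).neighborSet (i, .inr s) = clique i := by
  ext ⟨j, b | t⟩
  · simp [clique, eq_comm]
  · have := j.isLt
    simp only [mem_neighborSet, adj_inr_inr, inr_notMem_clique, iff_false]
    omega

theorem exists_neighborSet_inr_eq_insert (i : Fin p) (s : Fin 2)
    (h : ¬(((i : ℕ) = 0 ∧ s = 0) ∨ ((i : ℕ) = p - 1 ∧ s = 1))) :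
    ∃ (j : Fin p) (t : Fin 2),
      (detour d p).neighborSet (i, .inr s) = insert (j, .inr t) (clique i) := by
  have hi := i.isLt
  have h' : (s = 0 ∧ 0 < (i : ℕ)) ∨ (s = 1 ∧ (i : ℕ) + 1 < p) := by omega
  rcases h' with ⟨rfl, hi0⟩ | ⟨rfl, hip⟩
  on_goal 1 => refine ⟨⟨(i : ℕ) - 1, by omega⟩, 1, ?_⟩
  on_goal 2 => refine ⟨⟨(i : ℕ) + 1, hip⟩, 0, ?_⟩
  all_goals
    ext ⟨j, b | t⟩
    · simp [clique, eq_comm]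
    · simp only [mem_neighborSet, adj_inr_inr, Set.mem_insert_iff, inr_notMem_clique, or_false,
        Prod.mk.injEq, Sum.inr.injEq, Fin.ext_iff, Fin.val_zero, Fin.val_one]
      grind

theorem ncard_neighborSet_inr_of_end (i : Fin p) (s : Fin 2)
    (h : ((i : ℕ) = 0 ∧ s = 0) ∨ ((i : ℕ) = p - 1 ∧ s = 1)) :
    ((detour d p).neighborSet (i, .inr s)).ncard = d - 1 := by
  rw [neighborSet_inr_of_end i s h, ncard_clique]

theorem ncard_neighborSet_inr_of_not_end (hd : 1 ≤ d) (i : Fin p) (s : Fin 2)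
    (h : ¬(((i : ℕ) = 0 ∧ s = 0) ∨ ((i : ℕ) = p - 1 ∧ s = 1))) :
    ((detour d p).neighborSet (i, .inr s)).ncard = d := by
  obtain ⟨j, t, hN⟩ := exists_neighborSet_inr_eq_insert i s h
  rw [hN, Set.ncard_insert_of_notMem (inr_notMem_clique i j t), ncard_clique]
  omega

theorem exists_walk_inl_length_le_one (i : Fin p) (a : Fin (d - 1)) (u : Fin (d - 1) ⊕ Fin 2) :
    ∃ w : (detour d p).Walk (i, u) (i, .inl a), w.length ≤ 1 := by
  by_cases hu : u = .inl a
  · exact ⟨hu ▸ .nil, by subst hu; simp⟩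
  · have hadj : (detour d p).Adj (i, u) (i, .inl a) := by
      rcases u with b | s
      · exact adj_inl_inl.mpr ⟨rfl, fun h => hu (h ▸ rfl)⟩
      · exact adj_inr_inl.mpr rfl
    exact ⟨hadj.toWalk, by simp⟩

theorem exists_walk_length_le_two_of_fst_eq (hd : 2 ≤ d) (i : Fin p)
    (u v : Fin (d - 1) ⊕ Fin 2) :
    ∃ w : (detour d p).Walk (i, u) (i, v), w.length ≤ 2 := by
  obtain ⟨w₁, hw₁⟩ := exists_walk_inl_length_le_one i ⟨0, by omega⟩ u
  obtain ⟨w₂, hw₂⟩ := exists_walk_inl_length_le_one i ⟨0, by omega⟩ v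
  exact ⟨w₁.append w₂.reverse, by simp; omega⟩

theorem exists_walk_length_le_of_fst_eq_add (hd : 2 ≤ d) (n : ℕ) :
    ∀ (i j : Fin p) (u v : Fin (d - 1) ⊕ Fin 2), (j : ℕ) = i + n →
      ∃ w : (detour d p).Walk (i, u) (j, v), w.length ≤ 3 * n + 2 := by
  induction n with
  | zero =>
    intro i j u v hij
    obtain rfl : i = j := Fin.ext (by omega)
    exact exists_walk_length_le_two_of_fst_eq hd i u v
  | succ n ih =>
    intro i j u v hij
    let k : Fin p := ⟨i + n, by omega⟩
    obtain ⟨w₁, hw₁⟩ := ih i k u (.inr 1) rfl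
    obtain ⟨w₂, hw₂⟩ := exists_walk_length_le_two_of_fst_eq hd j (.inr 0) v
    have hkj : (detour d p).Adj (k, .inr 1) (j, .inr 0) :=
      adj_inr_inr.mpr (.inl ⟨by simp only [k]; omega, rfl, rfl⟩)
    exact ⟨w₁.append (.cons hkj w₂), by simp; omega⟩

theorem exists_walk_length_le (hd : 2 ≤ d) (x y : Fin p × (Fin (d - 1) ⊕ Fin 2)) :
    ∃ w : (detour d p).Walk x y, w.length ≤ 3 * p - 1 := by
  wlog hxy : (x.1 : ℕ) ≤ y.1 generalizing x y
  · obtain ⟨w, hw⟩ := this y x (by omega)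
    exact ⟨w.reverse, by simpa using hw⟩
  obtain ⟨w, hw⟩ :=
    exists_walk_length_le_of_fst_eq_add hd (y.1 - x.1) x.1 y.1 x.2 y.2 (by omega)
  have := y.1.isLt
  exact ⟨w, by omega⟩

/-- The distance from the end vertex `(0, inr 0)`. -/
def level (x : Fin p × (Fin (d - 1) ⊕ Fin 2)) : ℕ :=
  3 * x.1 + Sum.elim (fun _ => 1) (fun s : Fin 2 => 2 * (s : ℕ)) x.2

theorem level_le_of_adj {x y : Fin p × (Fin (d - 1) ⊕ Fin 2)} (h : (detour d p).Adj x y) :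
    level y ≤ level x + 1 := by
  obtain ⟨i, a | s⟩ := x <;> obtain ⟨j, b | t⟩ := y
  · obtain ⟨rfl, -⟩ := adj_inl_inl.mp h
    simp [level]
  · obtain rfl := adj_inl_inr.mp h
    simp only [level, Sum.elim_inl, Sum.elim_inr]
    omega
  · obtain rfl := adj_inr_inl.mp h
    simp [level]
  · simp only [level, Sum.elim_inr]
    rcases adj_inr_inr.mp h with ⟨_, rfl, rfl⟩ | ⟨_, rfl, rfl⟩ <;> simp <;> omega

theorem dist_le (hd : 2 ≤ d) (x y : Fin p × (Fin (d - 1) ⊕ Fin 2)) :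
    (detour d p).dist x y ≤ 3 * p - 1 := by
  obtain ⟨w, hw⟩ := exists_walk_length_le hd x y
  exact (SimpleGraph.dist_le w).trans hw

theorem preconnected (hd : 2 ≤ d) : (detour d p).Preconnected := fun x y =>
  (exists_walk_length_le hd x y).elim fun w _ => w.reachable

theorem dist_ends (hd : 2 ≤ d) (hp : 1 ≤ p) :
    (detour d p).dist (⟨0, by omega⟩, .inr 0) (⟨p - 1, by omega⟩, .inr 1) = 3 * p - 1 := by
  refine le_antisymm (dist_le hd _ _) ?_
  have h := (preconnected (p := p) hd (⟨0, by omega⟩, .inr 0) (⟨p - 1, by omega⟩, .inr 1)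
    ).le_add_dist fun _ _ => level_le_of_adj
  simp only [level, Sum.elim_inr, Fin.val_zero, Fin.val_one] at h
  omega

end Detour

/-- In the detour gadget built from `p ≥ 1` chained copies of `B_d` (`d ≥ 3`), every
vertex has degree `d` except exactly the two end vertices — the unused degree-`(d-1)`
vertex of the first copy and the unused degree-`(d-1)` vertex of the last copy — which
have degree `d - 1`; moreover the diameter equals `3p - 1`. -/
theorem stmt17 (d p : ℕ) (hd : 3 ≤ d) (hp : 1 ≤ p) :
    (∀ (i : Fin p) (a : Fin (d - 1)),
        ((detour d p).neighborSet (i, Sum.inl a)).ncard = d) ∧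
    (∀ (i : Fin p) (s : Fin 2),
        ¬(((i : ℕ) = 0 ∧ s = 0) ∨ ((i : ℕ) = p - 1 ∧ s = 1)) →
        ((detour d p).neighborSet (i, Sum.inr s)).ncard = d) ∧
    (∀ (i : Fin p) (s : Fin 2),
        (((i : ℕ) = 0 ∧ s = 0) ∨ ((i : ℕ) = p - 1 ∧ s = 1)) →
        ((detour d p).neighborSet (i, Sum.inr s)).ncard = d - 1) ∧
    (∀ x y, (detour d p).dist x y ≤ 3 * p - 1) ∧
    (∃ x y, (detour d p).dist x y = 3 * p - 1) :=
  ⟨Detour.ncard_neighborSet_inl (by omega), Detour.ncard_neighborSet_inr_of_not_end (by omega),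
    Detour.ncard_neighborSet_inr_of_end, Detour.dist_le (by omega),
    _, _, Detour.dist_ends (by omega) hp⟩
end
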